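/- Sample a forest uniformly from the set of plane forests with ranked roots having ECD s̃ (z̃ roots, m̃ vertices), and let X₁ be the number of children of the first root. Then P(X₁ = i) = (z̃ − 1 + i)·s̃_i / (z̃·(m̃−1)) for each i ≥ 0 with s̃_i ≥ 1. -/

import Mathlib

open scoped BigOperators Classical
open Filter MeasureTheory

namespace Paper

inductive PlaneTree : Type
  | node : List PlaneTree → PlaneTree

namespace PlaneTree

def deg : PlaneTree → ℕ
  | node ts => ts.length

mutual
  def pos : PlaneTree → List (List ℕ)
    | node ts => [] :: posF 0 ts
  def posF : ℕ → List PlaneTree → List (List ℕ)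
    | _, [] => []
    | i, t :: ts => (pos t).map (fun q => i :: q) ++ posF (i + 1) ts
end

mutual
  def dfsDeg : PlaneTree → List ℕ
    | node ts => ts.length :: dfsDegF ts
  def dfsDegF : List PlaneTree → List ℕ
    | [] => []
    | t :: ts => dfsDeg t ++ dfsDegF ts
end

def subtreeAt : PlaneTree → List ℕ → Option PlaneTree
  | t, [] => some t
  | node ts, i :: p =>
    match ts[i]? with
    | some t' => subtreeAt t' p
    | none => none

def numChild (t : PlaneTree) (p : List ℕ) : ℕ := ((subtreeAt t p).map deg).getD 0

def IsVertex (t : PlaneTree) (p : List ℕ) : Prop := (subtreeAt t p).isSome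

def IsLeaf (t : PlaneTree) (p : List ℕ) : Prop := (subtreeAt t p).isSome ∧ numChild t p = 0

/-- number of vertices of `t` having exactly `i` children (empirical children distribution) -/
def ecd (t : PlaneTree) (i : ℕ) : ℕ :=
  ((pos t).filter fun p => decide (numChild t p = i)).length

/-- ECD of a plane forest with ranked roots -/
def ecdF (f : List PlaneTree) (i : ℕ) : ℕ := (f.map fun t => ecd t i).sum

/-- number of children of the `j`-th root of a forest -/
def rootDeg (f : List PlaneTree) (j : ℕ) : ℕ := deg (f.getD j (node []))

/-- the set of plane forests with ranked roots with ECD `s` -/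
def forestSet (s : ℕ → ℕ) : Set (List PlaneTree) := {f | ∀ i, ecdF f i = s i}

/-- the set of plane trees with ECD `s` -/
def treeSet (s : ℕ → ℕ) : Set PlaneTree := {t | ∀ i, ecd t i = s i}

/-- strict depth-first (preorder) order on positions -/
def dfLT (p q : List ℕ) : Prop := List.Lex (· < ·) p q

def parent (p : List ℕ) : List ℕ := p.dropLast

/-- `q` is a strict ancestor of `p`, i.e. `q ∈ [ρ, p)` -/
def StrictAnc (q p : List ℕ) : Prop := q <+: p ∧ q ≠ p

/-- admissible (ordered) pair of leaves -/
def Admissible (t : PlaneTree) (u v : List ℕ) : Prop :=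
  IsLeaf t u ∧ IsLeaf t v ∧ 2 ≤ v.length ∧
    StrictAnc (parent (parent v)) (parent u) ∧ dfLT (parent u) (parent v)

def ASet (t : PlaneTree) : Set (List ℕ × List ℕ) := {uv | Admissible t uv.1 uv.2}

def fA (t : PlaneTree) (u : List ℕ) : Set (List ℕ) := {v | Admissible t u v}

def B2 (t : PlaneTree) (u : List ℕ) : Set (List ℕ) :=
  {v | IsVertex t v ∧ 2 ≤ v.length ∧ StrictAnc (parent (parent v)) u}

noncomputable def leafFinset (t : PlaneTree) : Finset (List ℕ) :=
  ((pos t).toFinset).filter fun p => IsLeaf t p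

def leafOf {k : ℕ} (w : Fin k → List ℕ × List ℕ) (y : Fin k × Bool) : List ℕ :=
  if y.2 then (w y.1).1 else (w y.1).2

/-- ordered `k`-tuples of admissible pairs using `2k` distinct leaves -/
def AkOrd (t : PlaneTree) (k : ℕ) : Set (Fin k → List ℕ × List ℕ) :=
  {w | (∀ a, Admissible t (w a).1 (w a).2) ∧ Function.Injective (leafOf w)}

/-- unordered collections of `k` admissible pairs using `2k` distinct leaves -/
def Ak (t : PlaneTree) (k : ℕ) : Set (Finset (List ℕ × List ℕ)) :=
  {x | x.card = k ∧ (∀ uv ∈ x, Admissible t uv.1 uv.2) ∧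
    Set.InjOn (fun y : (List ℕ × List ℕ) × Bool => if y.2 then y.1.1 else y.1.2)
      {y | y.1 ∈ x}}

/-- the set `T_s^(k)` of pairs of a plane tree with ECD `s` and a set of `k` admissible pairs -/
def Tsk (s : ℕ → ℕ) (k : ℕ) : Set (PlaneTree × Finset (List ℕ × List ℕ)) :=
  {tx | (∀ i, ecd tx.1 i = s i) ∧ tx.2 ∈ Ak tx.1 k}

end PlaneTree

/-- labeled plane trees -/
inductive LTree : Type
  | node : ℕ → List LTree → LTree

namespace LTree

mutual
  def shape : LTree → PlaneTree
    | node _ ts => .node (shapeF ts)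
  def shapeF : List LTree → List PlaneTree
    | [] => []
    | t :: ts => shape t :: shapeF ts
end

mutual
  def dfsLab : LTree → List ℕ
    | node a ts => a :: dfsLabF ts
  def dfsLabF : List LTree → List ℕ
    | [] => []
    | t :: ts => dfsLab t ++ dfsLabF ts
end

mutual
  def dfsDeg : LTree → List ℕ
    | node _ ts => ts.length :: dfsDegF ts
  def dfsDegF : List LTree → List ℕ
    | [] => []
    | t :: ts => dfsDeg t ++ dfsDegF ts
end

def subtreeAt : LTree → List ℕ → Option LTree
  | t, [] => some t
  | node _ ts, i :: p =>
    match ts[i]? with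
    | some t' => subtreeAt t' p
    | none => none

def labelAt (t : LTree) (p : List ℕ) : ℕ :=
  ((subtreeAt t p).map fun u => match u with | node a _ => a).getD 0

end LTree

/-- partial-sum steps of the permuted walk -/
def steps {m : ℕ} (c : Fin m → ℕ) (π : Equiv.Perm (Fin m)) : List ℤ :=
  List.ofFn fun i => (c (π i) : ℤ) - 1

/-- first index `j ∈ [1, length]` at which the partial sums attain their minimum -/
noncomputable def firstMinIdx (l : List ℤ) : ℕ :=
  (((Finset.Icc 1 l.length).filter fun j =>
      ∀ j' ∈ Finset.Icc 1 l.length, (l.take j).sum ≤ (l.take j').sum).min).untopD 0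

/-- the DFS vertex sequence obtained by rotating the uniformly permuted vertex
sequence at the first minimum of its Łukasiewicz-type walk (Vervaat transform) -/
noncomputable def rotSeq {m : ℕ} (c : Fin m → ℕ) (π : Equiv.Perm (Fin m)) : List (Fin m) :=
  (List.ofFn fun i => π i).rotate (firstMinIdx (steps c π))

/-- the degree of a vertex in a (simple) edge set -/
def degIn (E : Finset (Sym2 ℕ)) (v : ℕ) : ℕ := (E.filter fun e => v ∈ e).card

/-- degree of a vertex in a multigraph given by an edge multiset (loops count twice) -/
def mdeg (E : Multiset (Sym2 ℕ)) (v : ℕ) : ℕ :=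
  (E.map fun e => (if v ∈ e then 1 else 0) + (if e = s(v, v) then 1 else 0)).sum

/-- connectivity of a (multi)graph on vertex set `V` with edges `E` -/
def ConnOn (V : Finset ℕ) (E : Set (Sym2 ℕ)) : Prop :=
  ∀ a ∈ V, ∀ b ∈ V, Relation.ReflTransGen (fun a b => s(a, b) ∈ E) a b

/-- the set of simple connected labeled graphs on `{1, …, m}` with degree sequence `d` -/
def GconSet (m : ℕ) (d : ℕ → ℕ) : Set (Finset (Sym2 ℕ)) :=
  {E | (∀ e ∈ E, ¬ e.IsDiag) ∧ (∀ e ∈ E, ∀ v ∈ e, v ∈ Finset.Icc 1 m) ∧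
       (∀ v ∈ Finset.Icc 1 m, degIn E v = d v) ∧ ConnOn (Finset.Icc 1 m) (E : Set (Sym2 ℕ))}

/-- ECD of the children sequence `(d̃₂ − 1, …, d̃_{m̃} − 1, 0, …, 0)` (with `2k` zeros) -/
def ecdFromDeg (m k : ℕ) (d : ℕ → ℕ) (i : ℕ) : ℕ :=
  ((Finset.Icc 2 m).filter fun j => d j = i + 1).card + if i = 0 then 2 * k else 0

/-- `≪` order on admissible pairs -/
def pairLT (a b : List ℕ × List ℕ) : Prop :=
  PlaneTree.dfLT (PlaneTree.parent a.1) (PlaneTree.parent b.1) ∨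
    (PlaneTree.parent a.1 = PlaneTree.parent b.1 ∧
      PlaneTree.dfLT (PlaneTree.parent a.2) (PlaneTree.parent b.2))

/-- labeled elements of `T_s^(k)` as in the sampling algorithm: a labeled plane tree whose
labels are `{2, …, m̃ + 2k}`, in which the vertex labeled `j ≤ m̃` has `d̃_j − 1` children and
the vertices labeled `> m̃` are leaves, together with a `≪`-increasing tuple of `k` admissible
pairs of leaves with distinct leaves, the `j`-th pair carrying labels `(m̃+2j−1, m̃+2j)`. -/
def IsLabeledElement (m k : ℕ) (d : ℕ → ℕ) (t : LTree)
    (x : Fin k → List ℕ × List ℕ) : Prop :=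
  (LTree.dfsLab t).Perm (List.range' 2 (m - 1 + 2 * k)) ∧
  (∀ p ∈ PlaneTree.pos (LTree.shape t),
    PlaneTree.numChild (LTree.shape t) p =
      (if 2 ≤ LTree.labelAt t p ∧ LTree.labelAt t p ≤ m then d (LTree.labelAt t p) - 1 else 0)) ∧
  (∀ j, PlaneTree.Admissible (LTree.shape t) (x j).1 (x j).2) ∧
  Function.Injective (PlaneTree.leafOf x) ∧
  (∀ j j' : Fin k, j < j' → pairLT (x j) (x j')) ∧
  (∀ j : Fin k, LTree.labelAt t (x j).1 = m + 2 * (j : ℕ) + 1 ∧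
      LTree.labelAt t (x j).2 = m + 2 * (j : ℕ) + 2)

/-- the edge multiset of the graph `I(t, x)`: tree edges, with the leaves of the admissible
pairs deleted and an edge joining the two parents of each admissible pair added -/
noncomputable def Iedges (t : LTree) {k : ℕ} (x : Fin k → List ℕ × List ℕ) :
    Multiset (Sym2 ℕ) :=
  (↑(((PlaneTree.pos (LTree.shape t)).filter fun p =>
        decide (p ≠ ([] : List ℕ) ∧ ∀ j, p ≠ (x j).1 ∧ p ≠ (x j).2)).map
      fun p => s(LTree.labelAt t (PlaneTree.parent p), LTree.labelAt t p)) : Multiset (Sym2 ℕ))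
  + ↑(List.ofFn fun j =>
      s(LTree.labelAt t (PlaneTree.parent (x j).1), LTree.labelAt t (PlaneTree.parent (x j).2)))

/- Brownian excursion: Gaussian/Bessel kernels and finite-dimensional densities -/
noncomputable def gaussD (s x : ℝ) : ℝ := Real.exp (-(x ^ 2) / (2 * s)) / Real.sqrt (2 * Real.pi * s)

noncomputable def killedK (s x y : ℝ) : ℝ := gaussD s (y - x) - gaussD s (y + x)

noncomputable def bes3K (s x y : ℝ) : ℝ := (y / x) * killedK s x y

noncomputable def exStart (t x : ℝ) : ℝ :=
  Real.sqrt (2 / Real.pi) * x ^ 2 * t ^ (-(3 : ℝ) / 2) * Real.exp (-(x ^ 2) / (2 * t))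

noncomputable def exEnd (s x : ℝ) : ℝ := (2 / s) * gaussD s x

/-- finite-dimensional density of the standard Brownian excursion at times `t 0 < … < t n` -/
noncomputable def exFdd {n : ℕ} (t : Fin (n + 1) → ℝ) (x : Fin (n + 1) → ℝ) : ℝ :=
  if ∀ i, 0 < x i then
    Real.sqrt (Real.pi / 2) * exStart (t 0) (x 0) *
      (∏ i : Fin n, bes3K (t i.succ - t i.castSucc) (x i.castSucc) (x i.succ)) *
      exEnd (1 - t (Fin.last n)) (x (Fin.last n))
  else 0

/-- `e` is a standard Brownian excursion on `[0,1]`: continuous nonnegative paths vanishing at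
the endpoints, positive inside, with the excursion finite-dimensional densities. -/
def IsStdBrownianExcursion {Ω : Type*} [MeasureSpace Ω] (e : Ω → ℝ → ℝ) : Prop :=
  (∀ ω, Continuous (e ω)) ∧ (∀ ω, e ω 0 = 0) ∧ (∀ ω, e ω 1 = 0) ∧
  (∀ ω, ∀ x ∈ Set.Ioo (0 : ℝ) 1, 0 < e ω x) ∧
  (∀ t : ℝ, Measurable fun ω => e ω t) ∧
  ∀ (n : ℕ) (t : Fin (n + 1) → ℝ), StrictMono t → 0 < t 0 → t (Fin.last n) < 1 →
    Measure.map (fun ω i => e ω (t i)) (volume : Measure Ω)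
      = volume.withDensity fun x => ENNReal.ofReal (exFdd t x)

/-- `j`-th smallest value (0-based) among `ω 0, …, ω (m−1)` -/
noncomputable def orderStat {m : ℕ} (ω : Fin m → ℝ) (j : ℕ) : ℝ :=
  ((Multiset.map ω Finset.univ.val).sort (· ≤ ·)).getD j 0

end Paper

/-!
A forest is determined by its Łukasiewicz word `dfsDegF` (children counts in depth-first order),
which is a prefix code, and its ECD is the letter count of that word. Removing the first root and
promoting its `i` children to roots is a bijection from the forests with ECD `s` whose first root
has `i` children onto the forests with ECD `s - δᵢ`, which have `z - 1 + i` roots. Summing over `i`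
shows by induction on `m` that the number `N(s)` of forests with ECD `s` satisfies
`N(s) ∏ⱼ sⱼ! = z (m - 1)!`, and the law of `X₁` is `N(s - δᵢ) / N(s)`.
-/

namespace Paper
namespace PlaneTree

open Finset
open scoped Nat

mutual
theorem length_dfsDeg : ∀ t : PlaneTree, (dfsDeg t).length = (dfsDeg t).sum + 1
  | node cs => by simp [dfsDeg, length_dfsDegF cs]; omega
theorem length_dfsDegF : ∀ ts : List PlaneTree,
    (dfsDegF ts).length = (dfsDegF ts).sum + ts.length
  | [] => by simp [dfsDegF]
  | t :: ts => by simp [dfsDegF, length_dfsDeg t, length_dfsDegF ts]; omega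
end

mutual
theorem dfsDeg_append_inj : ∀ {t u : PlaneTree} {l l' : List ℕ},
    dfsDeg t ++ l = dfsDeg u ++ l' → t = u ∧ l = l'
  | node cs, node ds, l, l', h => by
    simp only [dfsDeg, List.cons_append, List.cons.injEq] at h
    obtain ⟨rfl, rfl⟩ := dfsDegF_append_inj h.1 h.2
    exact ⟨rfl, rfl⟩
theorem dfsDegF_append_inj : ∀ {ts us : List PlaneTree} {l l' : List ℕ},
    ts.length = us.length → dfsDegF ts ++ l = dfsDegF us ++ l' → ts = us ∧ l = l'
  | [], [], _, _, _, h => ⟨rfl, h⟩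
  | t :: ts, u :: us, l, l', hlen, h => by
    simp only [dfsDegF, List.append_assoc] at h
    obtain ⟨rfl, hrest⟩ := dfsDeg_append_inj h
    obtain ⟨rfl, rfl⟩ := dfsDegF_append_inj (Nat.succ.inj hlen) hrest
    exact ⟨rfl, rfl⟩
end

theorem dfsDegF_injective : Function.Injective dfsDegF := by
  intro f g h
  have hlen : f.length = g.length := by
    have hf := length_dfsDegF f
    have hg := length_dfsDegF g
    rw [h] at hf
    omega
  simpa using dfsDegF_append_inj (l := []) (l' := []) hlen (by rw [h])

theorem dfsDegF_append (a b : List PlaneTree) :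
    dfsDegF (a ++ b) = dfsDegF a ++ dfsDegF b := by
  induction a with
  | nil => rfl
  | cons t ts ih => simp only [List.cons_append, dfsDegF, ih, List.append_assoc]

theorem dfsDegF_node_cons (cs rest : List PlaneTree) :
    dfsDegF (node cs :: rest) = cs.length :: dfsDegF (cs ++ rest) := by
  rw [dfsDegF, dfsDeg, dfsDegF_append, List.cons_append]

mutual
theorem map_numChild_pos : ∀ t : PlaneTree, (pos t).map (numChild t) = dfsDeg t
  | node cs => by
    rw [pos, dfsDeg, List.map_cons, map_numChild_posF cs 0 cs rfl]
    rfl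
theorem map_numChild_posF : ∀ (cs : List PlaneTree) (i : ℕ) (L : List PlaneTree),
    L.drop i = cs → (posF i cs).map (numChild (node L)) = dfsDegF cs
  | [], _, _, _ => rfl
  | c :: cs, i, L, h => by
    have hc : L[i]? = some c := by
      rw [← Nat.add_zero i, ← List.getElem?_drop, h]
      rfl
    have hcs : L.drop (i + 1) = cs := by
      rw [← List.drop_drop, h]
      rfl
    rw [posF, dfsDegF, List.map_append, List.map_map, ← map_numChild_pos c,
      map_numChild_posF cs (i + 1) L hcs]
    congr 1
    exact List.map_congr_left fun q _ => by simp [numChild, subtreeAt, hc]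
end

theorem ecdF_eq_count (f : List PlaneTree) (i : ℕ) : ecdF f i = (dfsDegF f).count i := by
  have ecd_eq_count (t : PlaneTree) : ecd t i = (dfsDeg t).count i := by
    rw [ecd, ← map_numChild_pos t, List.count_eq_countP, List.countP_map,
      List.countP_eq_length_filter]
    rfl
  induction f with
  | nil => rfl
  | cons t ts ih => simp [ecdF, dfsDegF, List.count_append, ecd_eq_count, ← ih]

theorem mem_forestSet_iff {s : ℕ → ℕ} {f : List PlaneTree} :
    f ∈ forestSet s ↔ ∀ i, (dfsDegF f).count i = s i := by
  simp only [forestSet, Set.mem_ofPred_eq, ecdF_eq_count]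

theorem finite_setOf_forall_count_eq {α : Type*} [DecidableEq α] (s : α → ℕ) :
    {L : List α | ∀ a, L.count a = s a}.Finite := by
  rcases Set.eq_empty_or_nonempty {L : List α | ∀ a, L.count a = s a} with h | ⟨L₀, hL₀⟩
  · rw [h]
    exact Set.finite_empty
  · refine L₀.permutations.toFinset.finite_toSet.subset fun L hL => ?_
    simp only [Set.mem_ofPred_eq] at hL hL₀
    simp [List.mem_permutations, List.perm_iff_count, hL, hL₀]

theorem forestSet_finite (s : ℕ → ℕ) : (forestSet s).Finite :=
  ((finite_setOf_forall_count_eq s).preimage dfsDegF_injective.injOn).subset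
    fun _ hf => mem_forestSet_iff.1 hf

theorem forall_count_cons_iff_update {α : Type*} [DecidableEq α] {s : α → ℕ} {a : α}
    (ha : 1 ≤ s a) (L : List α) :
    (∀ b, (a :: L).count b = s b) ↔ ∀ b, L.count b = Function.update s a (s a - 1) b := by
  refine forall_congr' fun b => ?_
  rcases eq_or_ne b a with rfl | hb
  · simp only [List.count_cons_self, Function.update_self]
    omega
  · simp [hb.symm, hb]

section Support

variable {s : ℕ → ℕ} {M : ℕ}

theorem lt_of_count_pos (hsupp : ∀ j, M ≤ j → s j = 0) {L : List ℕ}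
    (hL : ∀ j, L.count j = s j) {x : ℕ} (hx : x ∈ L) : x < M := by
  by_contra hxM
  have := List.count_pos_iff.2 hx
  rw [hL, hsupp x (not_lt.1 hxM)] at this
  exact lt_irrefl 0 this

theorem length_eq_sum_of_forall_count_eq (hsupp : ∀ j, M ≤ j → s j = 0) {L : List ℕ}
    (hL : ∀ j, L.count j = s j) : L.length = ∑ j ∈ range M, s j := by
  have := Multiset.sum_count_eq_card (s := range M) (m := (L : Multiset ℕ))
    fun x hx => mem_range.2 (lt_of_count_pos hsupp hL hx)
  simpa [hL] using this.symm

theorem sum_eq_sum_mul_of_forall_count_eq (hsupp : ∀ j, M ≤ j → s j = 0) {L : List ℕ}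
    (hL : ∀ j, L.count j = s j) : L.sum = ∑ j ∈ range M, j * s j := by
  rw [Finset.sum_list_count_of_subset L (range M)
    fun x hx => mem_range.2 (lt_of_count_pos hsupp hL (List.mem_toFinset.1 hx))]
  simp [hL, mul_comm]

end Support

theorem rootDeg_mem_dfsDegF {f : List PlaneTree} (hf : f ≠ []) : rootDeg f 0 ∈ dfsDegF f := by
  obtain ⟨⟨cs⟩, rest, rfl⟩ := List.exists_cons_of_ne_nil hf
  rw [dfsDegF_node_cons]
  exact List.mem_cons_self

theorem one_le_rootDeg_of_mem_forestSet {s : ℕ → ℕ} {f : List PlaneTree} (hf : f ∈ forestSet s)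
    (hne : f ≠ []) : 1 ≤ s (rootDeg f 0) := by
  rw [← mem_forestSet_iff.1 hf]
  exact List.count_pos_iff.2 (rootDeg_mem_dfsDegF hne)

theorem ncard_rootDeg_fiber {s : ℕ → ℕ} {i : ℕ} (hsi : 1 ≤ s i)
    (hlen : ∀ g ∈ forestSet (Function.update s i (s i - 1)), i ≤ g.length) :
    {f ∈ forestSet s | rootDeg f 0 = i}.ncard
      = (forestSet (Function.update s i (s i - 1))).ncard := by
  have graft_code (g : List PlaneTree) (hg : i ≤ g.length) :
      dfsDegF (node (g.take i) :: g.drop i) = i :: dfsDegF g := by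
    rw [dfsDegF_node_cons, List.take_append_drop, List.length_take_of_le hg]
  symm
  refine Set.ncard_congr (fun g _ => node (g.take i) :: g.drop i) ?_ ?_ ?_
  · intro g hg
    refine ⟨?_, List.length_take_of_le (hlen g hg)⟩
    rw [mem_forestSet_iff, graft_code g (hlen g hg), forall_count_cons_iff_update hsi]
    exact mem_forestSet_iff.1 hg
  · intro g g' _ _ h
    simp only [List.cons.injEq, node.injEq] at h
    rw [← List.take_append_drop i g, ← List.take_append_drop i g', h.1, h.2]
  · rintro f ⟨hf, hroot⟩
    have hne : f ≠ [] := by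
      rintro rfl
      have := hf i
      simp only [ecdF, List.map_nil, List.sum_nil] at this
      omega
    obtain ⟨⟨cs⟩, rest, rfl⟩ := List.exists_cons_of_ne_nil hne
    obtain rfl : cs.length = i := hroot
    refine ⟨cs ++ rest, ?_, ?_⟩
    · rw [mem_forestSet_iff, ← forall_count_cons_iff_update hsi]
      simpa [dfsDegF_node_cons] using mem_forestSet_iff.1 hf
    · simp

theorem forestSet_single_zero_one : forestSet (Pi.single 0 1) = {[node []]} := by
  have hleaf : dfsDegF [node []] = [0] := rfl
  have hcount (a : ℕ) : List.count a [0] = (Pi.single 0 1 : ℕ → ℕ) a := by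
    rcases eq_or_ne a 0 with rfl | ha
    · simp
    · simp [ha.symm]
  ext f
  rw [mem_forestSet_iff, Set.mem_singleton_iff]
  constructor
  · intro hf
    have hperm : (dfsDegF f).Perm [0] := List.perm_iff_count.2 fun a => by
      rw [hf, hcount]
    exact dfsDegF_injective (List.perm_singleton.1 hperm)
  · rintro rfl a
    rw [hleaf, hcount]

theorem ncard_forestSet_eq_sum_ncard_rootDeg {s : ℕ → ℕ} {M : ℕ}
    (hsupp : ∀ i, M ≤ i → s i = 0) (hnil : [] ∉ forestSet s) :
    (forestSet s).ncard = ∑ i ∈ range M, {f ∈ forestSet s | rootDeg f 0 = i}.ncard := by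
  have hfin := forestSet_finite s
  rw [Set.ncard_eq_toFinset_card _ hfin,
    card_eq_sum_card_fiberwise (f := fun f => rootDeg f 0) (t := range M)]
  · refine sum_congr rfl fun i _ => ?_
    rw [← Set.ncard_coe_finset]
    congr 1
    ext f
    simp
  · intro f hf
    rw [Finset.mem_coe, Set.Finite.mem_toFinset] at hf
    refine mem_range.2 (lt_of_count_pos hsupp (mem_forestSet_iff.1 hf) ?_)
    exact rootDeg_mem_dfsDegF fun h => hnil (h ▸ hf)

theorem sum_mul_update_pred_add {S : Finset ℕ} {s : ℕ → ℕ} {i : ℕ} (hi : i ∈ S) (hsi : 1 ≤ s i)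
    (g : ℕ → ℕ) :
    ∑ j ∈ S, g j * Function.update s i (s i - 1) j + g i = ∑ j ∈ S, g j * s j := by
  rw [← add_sum_erase S _ hi, ← add_sum_erase S _ hi, Function.update_self,
    sum_congr rfl fun j hj => by rw [Function.update_of_ne (ne_of_mem_erase hj)]]
  obtain ⟨k, hk⟩ := Nat.exists_eq_add_of_le' hsi
  rw [hk, Nat.add_sub_cancel]
  ring

theorem mul_prod_factorial_update_pred {S : Finset ℕ} {s : ℕ → ℕ} {i : ℕ} (hi : i ∈ S)
    (hsi : 1 ≤ s i) :
    s i * ∏ j ∈ S, (Function.update s i (s i - 1) j)! = ∏ j ∈ S, (s j)! := by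
  rw [← mul_prod_erase S _ hi, ← mul_prod_erase S _ hi, Function.update_self,
    prod_congr rfl fun j hj => by rw [Function.update_of_ne (ne_of_mem_erase hj)],
    ← mul_assoc, Nat.mul_factorial_pred (by omega)]

structure IsForestECD (s : ℕ → ℕ) (M z m : ℕ) : Prop where
  support : ∀ i, M ≤ i → s i = 0
  card : m = ∑ i ∈ range M, s i
  -- every vertex other than the `z` roots is the child of exactly one vertex
  roots : m = z + ∑ i ∈ range M, i * s i

namespace IsForestECD

variable {s : ℕ → ℕ} {M z m : ℕ}

theorem lt_of_one_le (h : IsForestECD s M z m) {i : ℕ} (hsi : 1 ≤ s i) : i < M := by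
  by_contra hiM
  have := h.support i (not_lt.1 hiM)
  omega

theorem update_pred (h : IsForestECD s M z m) (hz : 1 ≤ z) {i : ℕ} (hsi : 1 ≤ s i) :
    IsForestECD (Function.update s i (s i - 1)) M (z - 1 + i) (m - 1) := by
  have hi := mem_range.2 (h.lt_of_one_le hsi)
  have hcard := sum_mul_update_pred_add hi hsi fun _ => 1
  have hdeg := sum_mul_update_pred_add hi hsi id
  simp only [one_mul, id] at hcard hdeg
  have := h.card
  have := h.roots
  refine ⟨fun j hj => ?_, by omega, by omega⟩
  rw [Function.update_of_ne (by have := h.lt_of_one_le hsi; omega), h.support j hj]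

theorem length_eq (h : IsForestECD s M z m) {f : List PlaneTree} (hf : f ∈ forestSet s) :
    f.length = z := by
  have hcode := mem_forestSet_iff.1 hf
  have hlen := length_dfsDegF f
  rw [length_eq_sum_of_forall_count_eq h.support hcode,
    sum_eq_sum_mul_of_forall_count_eq h.support hcode, ← h.card] at hlen
  have := h.roots
  omega

theorem nil_notMem_forestSet (h : IsForestECD s M z m) (hm : 1 ≤ m) : [] ∉ forestSet s := by
  intro hnil
  have hlen := length_eq_sum_of_forall_count_eq h.support (mem_forestSet_iff.1 hnil)
  rw [← h.card] at hlen
  simp only [dfsDegF, List.length_nil] at hlen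
  omega

theorem eq_single_zero_one (h : IsForestECD s M z 1) (hz : 1 ≤ z) : s = Pi.single 0 1 := by
  have hdeg : ∑ j ∈ range M, j * s j = 0 := by have := h.roots; omega
  have hs (j : ℕ) (hj : j ≠ 0) : s j = 0 := by
    rcases lt_or_ge j M with hjM | hjM
    · simpa [hj] using sum_eq_zero_iff.1 hdeg j (mem_range.2 hjM)
    · exact h.support j hjM
  have hs0 : s 0 = 1 := by
    rw [h.card, sum_eq_single 0 (fun j _ hj => hs j hj)
      fun h0 => h.support 0 (by simpa using h0)]
  funext j
  rcases eq_or_ne j 0 with rfl | hj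
  · simp [hs0]
  · simp [hs j hj, hj]

theorem forestSet_eq_empty (h : IsForestECD s M 0 m) (hm : 1 ≤ m) : forestSet s = ∅ :=
  Set.eq_empty_of_forall_notMem fun _ hf =>
    h.nil_notMem_forestSet hm (List.eq_nil_of_length_eq_zero (h.length_eq hf) ▸ hf)

theorem sum_mul_pred_add (h : IsForestECD s M z m) (hz : 1 ≤ z) :
    ∑ i ∈ range M, s i * (z - 1 + i) = z * (m - 1) := by
  have hsplit : ∑ i ∈ range M, s i * (z - 1 + i)
      = (z - 1) * ∑ i ∈ range M, s i + ∑ i ∈ range M, i * s i := by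
    rw [mul_sum, ← sum_add_distrib]
    exact sum_congr rfl fun i _ => by ring
  have hzm : z ≤ m := by have := h.roots; omega
  rw [hsplit, ← h.card, show ∑ i ∈ range M, i * s i = m - z by have := h.roots; omega]
  zify [hz, hzm, hz.trans hzm]
  ring

theorem ncard_rootDeg_mul_prod_factorial (h : IsForestECD s M z m) (hz : 1 ≤ z) {i : ℕ}
    (hsi : 1 ≤ s i) :
    {f ∈ forestSet s | rootDeg f 0 = i}.ncard * ∏ j ∈ range M, (s j)!
      = s i * ((forestSet (Function.update s i (s i - 1))).ncard
          * ∏ j ∈ range M, (Function.update s i (s i - 1) j)!) := by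
  have hlen (g : List PlaneTree) (hg : g ∈ forestSet (Function.update s i (s i - 1))) :
      i ≤ g.length := by
    rw [(h.update_pred hz hsi).length_eq hg]
    omega
  rw [ncard_rootDeg_fiber hsi hlen,
    ← mul_prod_factorial_update_pred (mem_range.2 (h.lt_of_one_le hsi)) hsi]
  ring

theorem ncard_rootDeg_eq_zero (h : IsForestECD s M z m) (hm : 1 ≤ m) {i : ℕ} (hsi : s i = 0) :
    {f ∈ forestSet s | rootDeg f 0 = i}.ncard = 0 := by
  convert Set.ncard_empty (List PlaneTree)
  refine Set.eq_empty_of_forall_notMem ?_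
  rintro f ⟨hf, rfl⟩
  have := one_le_rootDeg_of_mem_forestSet hf fun hnil => h.nil_notMem_forestSet hm (hnil ▸ hf)
  omega

end IsForestECD

theorem ncard_forestSet_mul_prod_factorial {s : ℕ → ℕ} {M z m : ℕ} (h : IsForestECD s M z m)
    (hm : 1 ≤ m) : (forestSet s).ncard * ∏ j ∈ range M, (s j)! = z * (m - 1)! := by
  induction m using Nat.strong_induction_on generalizing s z with
  | _ m ih =>
  rcases Nat.eq_zero_or_pos z with rfl | hz
  · simp [h.forestSet_eq_empty hm]
  rcases hm.eq_or_lt with rfl | hm2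
  · obtain rfl := h.eq_single_zero_one hz
    have hz1 : z = 1 := by have := h.roots; omega
    rw [forestSet_single_zero_one, Set.ncard_singleton, hz1,
      prod_eq_one fun j _ => Nat.factorial_eq_one.2 (Pi.single_apply 0 1 j ▸ by split <;> omega)]
    rfl
  have hfiber (i : ℕ) (_ : i ∈ range M) :
      {f ∈ forestSet s | rootDeg f 0 = i}.ncard * ∏ j ∈ range M, (s j)!
        = s i * (z - 1 + i) * (m - 1 - 1)! := by
    rcases Nat.eq_zero_or_pos (s i) with hsi | hsi
    · simp [h.ncard_rootDeg_eq_zero hm hsi, hsi]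
    · rw [h.ncard_rootDeg_mul_prod_factorial hz hsi,
        ih (m - 1) (by omega) (h.update_pred hz hsi) (by omega), mul_assoc]
  rw [ncard_forestSet_eq_sum_ncard_rootDeg h.support (h.nil_notMem_forestSet hm), sum_mul,
    sum_congr rfl hfiber, ← sum_mul, h.sum_mul_pred_add hz, mul_assoc,
    Nat.mul_factorial_pred (by omega)]

end PlaneTree
end Paper

open Paper Paper.PlaneTree in
/-- law of the children count of the first root of a uniform forest. -/
theorem forest_first_root_law (s : ℕ → ℕ) (M z m : ℕ)
    (hsupp : ∀ i, M ≤ i → s i = 0)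
    (hm : m = ∑ i ∈ Finset.range M, s i)
    (hz : m = z + ∑ i ∈ Finset.range M, i * s i)
    (hz1 : 1 ≤ z) (hm2 : 2 ≤ m)
    (i : ℕ) (hsi : 1 ≤ s i) :
    {f ∈ forestSet s | rootDeg f 0 = i}.ncard * (z * (m - 1))
      = (z - 1 + i) * s i * (forestSet s).ncard := by
  have h : IsForestECD s M z m := ⟨hsupp, hm, hz⟩
  have hcount := ncard_forestSet_mul_prod_factorial h (by omega)
  have hcount' := ncard_forestSet_mul_prod_factorial (h.update_pred hz1 hsi) (by omega)
  have hfiber := h.ncard_rootDeg_mul_prod_factorial hz1 hsi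
  refine Nat.eq_of_mul_eq_mul_right
    (Finset.prod_pos (s := Finset.range M) fun j _ => (s j).factorial_pos) ?_
  calc {f ∈ forestSet s | rootDeg f 0 = i}.ncard * (z * (m - 1))
        * ∏ j ∈ Finset.range M, (s j).factorial
      = s i * ((z - 1 + i) * (m - 1 - 1).factorial) * (z * (m - 1)) := by
        rw [mul_right_comm, hfiber, hcount']
    _ = (z - 1 + i) * s i * (z * ((m - 1) * (m - 1 - 1).factorial)) := by ring
    _ = (z - 1 + i) * s i * (forestSet s).ncard * ∏ j ∈ Finset.range M, (s j).factorial := by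
      rw [Nat.mul_factorial_pred (by omega), ← hcount]
      ring
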